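/- Let ν ∈ Λ with (ν,e₁) = (ν,e₂) = 0, let a₁, a₂ ∈ ℤ, and set ξ := a₁e₁ + a₂e₂ + ν. Assume (ξ,ξ) = −2. If the composite map r_ζ ∘ r_ξ ∘ r_ζ : Λ⊗ℚ → Λ⊗ℚ maps Λ into Λ (i.e., r_ζ ∘ r_ξ ∘ r_ζ ∈ O(Λ)), then (ξ,ζ) ≡ 0 (mod 5). -/

import Mathlib

/-- The involution `r_γ(x) = −x + (2(x,γ)/(γ,γ))·γ` of a rational quadratic space, with
`(+1)`-eigenspace `ℚγ` and `(−1)`-eigenspace `γ^⊥`. -/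
noncomputable def reflAlong {V : Type*} [AddCommGroup V] [Module ℚ V]
    (B : V →ₗ[ℚ] V →ₗ[ℚ] ℚ) (γ : V) (x : V) : V :=
  -x + ((2 * B x γ) / B γ γ) • γ

/-!
The conjugate `r_ζ ∘ r_ξ ∘ r_ζ` is the reflection in the root `η = r_ζ ξ`, and
`(r_η e₁, e₁) = 2 - (e₁, η)²`, so integrality of `r_η` forces `(e₁, η) ∈ ℤ`.
Since `(ζ, ζ) = -10` and `(e₁, ζ) = -2`, we have `(e₁, η) = -(e₁, ξ) + 2(ξ, ζ)/5`,
and as `ξ, ζ ∈ Λ` this gives `5 ∣ 2(ξ, ζ)`.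
-/

theorem Rat.exists_int_eq_of_sq_eq_int {q : ℚ} {n : ℤ} (h : q ^ 2 = n) : ∃ m : ℤ, q = m := by
  have hden : q.den ^ 2 = 1 := by rw [← Rat.den_pow, h, Rat.den_intCast]
  exact ⟨q.num, (Rat.coe_int_num_of_den_eq_one (by simpa using hden)).symm⟩

section reflAlong

variable {V : Type*} [AddCommGroup V] [Module ℚ V] (B : V →ₗ[ℚ] V →ₗ[ℚ] ℚ)

theorem apply_reflAlong_left (γ x y : V) :
    B (reflAlong B γ x) y = -B x y + 2 * B x γ / B γ γ * B γ y := by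
  simp [reflAlong]

theorem reflAlong_add (γ x y : V) :
    reflAlong B γ (x + y) = reflAlong B γ x + reflAlong B γ y := by
  simp only [reflAlong, map_add, LinearMap.add_apply]
  module

theorem reflAlong_smul (γ : V) (c : ℚ) (x : V) :
    reflAlong B γ (c • x) = c • reflAlong B γ x := by
  simp only [reflAlong, map_smul, LinearMap.smul_apply, smul_eq_mul]
  module

theorem reflAlong_reflAlong {γ : V} (hγ : B γ γ ≠ 0) (x : V) :
    reflAlong B γ (reflAlong B γ x) = x := by
  simp only [reflAlong, map_add, map_neg, map_smul, LinearMap.add_apply, LinearMap.neg_apply,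
    LinearMap.smul_apply, smul_eq_mul]
  rw [div_mul_cancel₀ _ hγ]
  module

theorem apply_reflAlong_reflAlong (hB : ∀ x y : V, B x y = B y x) {γ : V} (hγ : B γ γ ≠ 0)
    (x y : V) : B (reflAlong B γ x) (reflAlong B γ y) = B x y := by
  simp only [reflAlong, map_add, map_neg, map_smul, LinearMap.add_apply, LinearMap.neg_apply,
    LinearMap.smul_apply, smul_eq_mul, hB y γ]
  field_simp
  ring

theorem apply_reflAlong_left_eq_apply_reflAlong_right (hB : ∀ x y : V, B x y = B y x) {γ : V}
    (hγ : B γ γ ≠ 0) (x y : V) : B (reflAlong B γ x) y = B x (reflAlong B γ y) := by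
  simpa only [reflAlong_reflAlong B hγ] using apply_reflAlong_reflAlong B hB hγ x (reflAlong B γ y)

theorem reflAlong_conj (hB : ∀ x y : V, B x y = B y x) {γ : V} (hγ : B γ γ ≠ 0) (ξ x : V) :
    reflAlong B γ (reflAlong B ξ (reflAlong B γ x)) = reflAlong B (reflAlong B γ ξ) x := by
  rw [show reflAlong B ξ (reflAlong B γ x) = -reflAlong B γ x + _ from rfl, reflAlong_add,
    reflAlong_smul, ← neg_one_smul ℚ (reflAlong B γ x), reflAlong_smul, reflAlong_reflAlong B hγ,
    neg_one_smul, apply_reflAlong_left_eq_apply_reflAlong_right B hB hγ]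
  rw [show reflAlong B (reflAlong B γ ξ) x = -x + _ from rfl, apply_reflAlong_reflAlong B hB hγ]

theorem apply_reflAlong_self_of_apply_self_eq_neg_two (hB : ∀ x y : V, B x y = B y x) {η : V}
    (hη : B η η = -2) (x : V) : B (reflAlong B η x) x = -B x x - B x η ^ 2 := by
  rw [apply_reflAlong_left, hη, hB η x]
  ring

theorem exists_int_apply_of_reflAlong_mem (hB : ∀ x y : V, B x y = B y x) (L : Submodule ℤ V)
    (hint : ∀ x ∈ L, ∀ y ∈ L, ∃ n : ℤ, B x y = (n : ℚ)) {η : V} (hη : B η η = -2) {x : V}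
    (hx : x ∈ L) (hrx : reflAlong B η x ∈ L) : ∃ m : ℤ, B x η = m := by
  obtain ⟨n, hn⟩ := hint _ hrx x hx
  obtain ⟨k, hk⟩ := hint x hx x hx
  rw [apply_reflAlong_self_of_apply_self_eq_neg_two B hB hη, hk] at hn
  exact Rat.exists_int_eq_of_sq_eq_int (n := -k - n) (by push_cast; linarith)

end reflAlong

theorem refl_conj_integral_imp_five_dvd_general
    (V : Type*) [AddCommGroup V] [Module ℚ V]
    (B : V →ₗ[ℚ] V →ₗ[ℚ] ℚ) (hsymm : ∀ x y : V, B x y = B y x)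
    (L : Submodule ℤ V)
    (hint : ∀ x ∈ L, ∀ y ∈ L, ∃ n : ℤ, B x y = (n : ℚ))
    (e₁ e₂ ν : V) (he₁ : e₁ ∈ L) (he₂ : e₂ ∈ L) (hν : ν ∈ L)
    (h11 : B e₁ e₁ = -2) (h22 : B e₂ e₂ = -2) (h12 : B e₁ e₂ = 0)
    (a₁ a₂ : ℤ) (ξ ζ : V)
    (hξ : ξ = (a₁ : ℚ) • e₁ + (a₂ : ℚ) • e₂ + ν)
    (hξξ : B ξ ξ = -2)
    (hζ : ζ = e₁ + (2 : ℚ) • e₂)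
    (hmap : ∀ x ∈ L, reflAlong B ζ (reflAlong B ξ (reflAlong B ζ x)) ∈ L) :
    ∃ k : ℤ, B ξ ζ = ((5 * k : ℤ) : ℚ) := by
  have hζζ : B ζ ζ = -10 := by
    simp only [hζ, map_add, map_smul, LinearMap.add_apply, LinearMap.smul_apply, smul_eq_mul,
      h11, h12, h22, hsymm e₂ e₁]
    norm_num
  have he₁ζ : B e₁ ζ = -2 := by simp [hζ, h11, h12]
  have hξL : ξ ∈ L := by
    rw [hξ, Int.cast_smul_eq_zsmul, Int.cast_smul_eq_zsmul]
    exact add_mem (add_mem (L.smul_mem a₁ he₁) (L.smul_mem a₂ he₂)) hν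
  have hζL : ζ ∈ L := by
    rw [hζ, ofNat_smul_eq_nsmul]
    exact add_mem he₁ (L.nsmul_mem he₂ 2)
  have hζ0 : B ζ ζ ≠ 0 := by rw [hζζ]; norm_num
  have hηη : B (reflAlong B ζ ξ) (reflAlong B ζ ξ) = -2 := by
    rw [apply_reflAlong_reflAlong B hsymm hζ0, hξξ]
  obtain ⟨m, hm⟩ := exists_int_apply_of_reflAlong_mem B hsymm L hint hηη he₁
    (reflAlong_conj B hsymm hζ0 ξ e₁ ▸ hmap e₁ he₁)
  obtain ⟨p, hp⟩ := hint e₁ he₁ ξ hξL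
  obtain ⟨s, hs⟩ := hint ξ hξL ζ hζL
  have hmps : (5 * (m + p) : ℚ) = 2 * s := by
    rw [hsymm e₁, apply_reflAlong_left, hζζ, hsymm ζ e₁, he₁ζ, hsymm ξ e₁, hp, hs] at hm
    linarith
  obtain ⟨k, rfl⟩ : (5 : ℤ) ∣ s := by
    have : 5 * (m + p) = 2 * s := by exact_mod_cast hmps
    omega
  exact ⟨k, hs⟩

/-- let `Λ` be a lattice (a free `ℤ`-module of finite rank, realized here
as a `ℤ`-submodule `L` of the rational quadratic space `(V,B)` on which the form is
`ℤ`-valued), let `e₁, e₂ ∈ L` with `(e₁,e₁) = (e₂,e₂) = −2`, `(e₁,e₂) = 0`, and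
`ζ = e₁ + 2e₂`.  If `ξ = a₁e₁ + a₂e₂ + ν` with `ν ∈ L` orthogonal to `e₁, e₂`,
`(ξ,ξ) = −2`, and the composite `r_ζ ∘ r_ξ ∘ r_ζ` maps `L` into `L`, then
`(ξ,ζ) ≡ 0 (mod 5)`. -/
theorem refl_conj_integral_imp_five_dvd
    (V : Type*) [AddCommGroup V] [Module ℚ V]
    (B : V →ₗ[ℚ] V →ₗ[ℚ] ℚ) (hsymm : ∀ x y : V, B x y = B y x)
    (L : Submodule ℤ V) [Module.Free ℤ (↥L)] [Module.Finite ℤ (↥L)]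
    (hint : ∀ x ∈ L, ∀ y ∈ L, ∃ n : ℤ, B x y = (n : ℚ))
    (e₁ e₂ ν : V) (he₁ : e₁ ∈ L) (he₂ : e₂ ∈ L) (hν : ν ∈ L)
    (h11 : B e₁ e₁ = -2) (h22 : B e₂ e₂ = -2) (h12 : B e₁ e₂ = 0)
    (hν1 : B ν e₁ = 0) (hν2 : B ν e₂ = 0)
    (a₁ a₂ : ℤ) (ξ ζ : V)
    (hξ : ξ = (a₁ : ℚ) • e₁ + (a₂ : ℚ) • e₂ + ν)
    (hξξ : B ξ ξ = -2)
    (hζ : ζ = e₁ + (2 : ℚ) • e₂)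
    (hmap : ∀ x ∈ L, reflAlong B ζ (reflAlong B ξ (reflAlong B ζ x)) ∈ L) :
    ∃ k : ℤ, B ξ ζ = ((5 * k : ℤ) : ℚ) :=
  refl_conj_integral_imp_five_dvd_general V B hsymm L hint e₁ e₂ ν he₁ he₂ hν h11 h22 h12 a₁ a₂ ξ ζ
    hξ hξξ hζ hmap
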